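/- Let m be a positive integer, M = 2m, q = m+1, and k ≥ 0 an integer. Then there are exactly two expansions (c_i) of 1 in base q over the alphabet {0,...,M} such that c_1 = ⋯ = c_k = m and c_{k+1} ≠ m: namely c_{k+1} = m+1 followed by all zeros, and c_{k+1} = m-1 followed by all digits equal to 2m. Consequently, 1 has exactly countably infinitely many expansions in base m+1 over the alphabet {0,...,2m}. -/

import Mathlib

/-!
Write `q = m + 1`. A tail of digits in `{0, …, 2m}` has value in `[0, 2m/(q - 1)] = [0, 2]`, and
`m/q + 1/q = 1`, so an expansion of `1` starting with the digit `m` has an expansion of `1` as its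
tail. This reduces everything to a first digit `c₀ ≠ m`: from `1 = (c₀ + T)/q` with `T ∈ [0, 2]`
the value of the tail, `c₀ ∈ {m - 1, m + 1}`, and then `T` is extremal (`0` or `2`), which forces
every later digit to be `0`, resp. `2m`. So an expansion of `1` is either the constant sequence `m`
or determined by the first index `k` with `c_k ≠ m` and one of two choices; the sequences
`m^k (m + 1) 0^ω` are pairwise distinct.
-/

open Function

def IsExpansion (q : ℝ) (M : ℕ) (x : ℝ) (c : ℕ → ℕ) : Prop :=
  (∀ i, c i ≤ M) ∧ ∑' i, (c i : ℝ) / q ^ (i + 1) = x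

def blockSeq (a k d b : ℕ) : ℕ → ℕ := fun i => if i < k then a else if i = k then d else b

section Expansion

variable {q : ℝ} {M : ℕ} {x : ℝ} {c : ℕ → ℕ}

lemma div_pow_succ_eq_mul_inv_pow (d : ℝ) (i : ℕ) : d / q ^ (i + 1) = d / q * q⁻¹ ^ i := by
  rw [pow_succ', inv_pow, div_mul_eq_div_div, div_eq_mul_inv _ (q ^ i)]

lemma summable_digits_div_pow (hq : 1 < q) (hc : ∀ i, c i ≤ M) :
    Summable fun i => (c i : ℝ) / q ^ (i + 1) := by
  have hgeom : Summable fun i : ℕ => (M : ℝ) / q * q⁻¹ ^ i :=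
    (summable_geometric_of_lt_one (by positivity) (inv_lt_one_of_one_lt₀ hq)).mul_left _
  refine hgeom.of_nonneg_of_le (fun i => by positivity) fun i => ?_
  rw [div_pow_succ_eq_mul_inv_pow]
  gcongr
  exact_mod_cast hc i

lemma tsum_const_div_pow_succ (hq : 1 < q) (d : ℝ) : ∑' i : ℕ, d / q ^ (i + 1) = d / (q - 1) := by
  have hq₀ : q - 1 ≠ 0 := by linarith
  simp_rw [div_pow_succ_eq_mul_inv_pow, tsum_mul_left,
    tsum_geometric_of_lt_one (by positivity) (inv_lt_one_of_one_lt₀ hq)]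
  field_simp

lemma tsum_digits_eq_head_add_tail (hq : 1 < q) (hc : ∀ i, c i ≤ M) :
    ∑' i, (c i : ℝ) / q ^ (i + 1) = (c 0 + ∑' i, (c (i + 1) : ℝ) / q ^ (i + 1)) / q := by
  rw [(summable_digits_div_pow hq hc).tsum_eq_zero_add, add_div, ← tsum_div_const]
  simp_rw [pow_succ _ (_ + 1), ← div_div, zero_add, pow_one]

lemma isExpansion_iff_tail (hq : 1 < q) :
    IsExpansion q M x c ↔ c 0 ≤ M ∧ IsExpansion q M (q * x - c 0) fun i => c (i + 1) := by
  unfold IsExpansion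
  rw [← Nat.and_forall_add_one, and_assoc]
  refine and_congr_right fun h₀ => and_congr_right fun hc => ?_
  have hc' : ∀ i, c i ≤ M := Nat.and_forall_add_one.mp ⟨h₀, hc⟩
  rw [tsum_digits_eq_head_add_tail hq hc', div_eq_iff (by positivity)]
  constructor <;> intro h <;> linarith

lemma IsExpansion.nonneg (h : IsExpansion q M x c) (hq : 1 < q) : 0 ≤ x :=
  h.2 ▸ tsum_nonneg fun i => by positivity

lemma IsExpansion.le (h : IsExpansion q M x c) (hq : 1 < q) : x ≤ M / (q - 1) := by
  rw [← h.2, ← tsum_const_div_pow_succ hq]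
  refine (summable_digits_div_pow hq h.1).tsum_le_tsum (fun i => ?_)
    (summable_digits_div_pow (c := fun _ => M) hq fun _ => le_rfl)
  gcongr
  exact_mod_cast h.1 i

lemma IsExpansion.eq_zero (h : IsExpansion q M 0 c) (hq : 1 < q) (i : ℕ) : c i = 0 := by
  have hsum := h.2 ▸ (summable_digits_div_pow hq h.1).hasSum
  have := congrFun ((hasSum_zero_iff_of_nonneg fun j => by positivity).mp hsum) i
  simpa [(pow_pos (zero_lt_one.trans hq) _).ne'] using this

lemma IsExpansion.eq_of_eq_max (h : IsExpansion q M (M / (q - 1)) c) (hq : 1 < q) (i : ℕ) :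
    c i = M := by
  by_contra hi
  have hlt : (c i : ℝ) / q ^ (i + 1) < (M : ℝ) / q ^ (i + 1) := by
    gcongr
    exact_mod_cast lt_of_le_of_ne (h.1 i) hi
  have := (summable_digits_div_pow hq h.1).tsum_lt_tsum
    (g := fun j => (M : ℝ) / q ^ (j + 1)) (fun j => ?_) hlt
    (summable_digits_div_pow (c := fun _ => M) hq fun _ => le_rfl)
  · rw [h.2, tsum_const_div_pow_succ hq] at this
    exact lt_irrefl _ this
  · dsimp only
    gcongr
    exact_mod_cast h.1 j

lemma isExpansion_const (hq : 1 < q) {d : ℕ} (hd : d ≤ M) :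
    IsExpansion q M (d / (q - 1)) fun _ => d :=
  ⟨fun _ => hd, tsum_const_div_pow_succ hq d⟩

end Expansion

section BlockSeq

variable {a k d b : ℕ} {c : ℕ → ℕ}

lemma eq_blockSeq_zero_iff : c = blockSeq a 0 d b ↔ c 0 = d ∧ ∀ i, c (i + 1) = b := by
  rw [funext_iff, ← Nat.and_forall_add_one]
  simp [blockSeq]

lemma eq_blockSeq_succ_iff :
    c = blockSeq a (k + 1) d b ↔ c 0 = a ∧ (fun i => c (i + 1)) = blockSeq a k d b := by
  rw [funext_iff, funext_iff, ← Nat.and_forall_add_one]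
  simp [blockSeq]

lemma blockSeq_injective (hda : d ≠ a) : Injective fun k => blockSeq a k d b := by
  intro j k h
  by_contra hjk
  wlog hlt : j < k generalizing j k
  · exact this h.symm (Ne.symm hjk) (by omega)
  have := congrFun h j
  simp [blockSeq, hlt] at this
  exact hda this

end BlockSeq

section SuccBase

variable {m : ℕ} {c : ℕ → ℕ}

lemma one_lt_natCast_add_one (hm : 0 < m) : (1 : ℝ) < m + 1 := by
  simpa using hm

lemma isExpansion_one_iff_tail_of_head_eq (hm : 0 < m) (h₀ : c 0 = m) :
    IsExpansion (m + 1) (2 * m) 1 c ↔ IsExpansion (m + 1) (2 * m) 1 fun i => c (i + 1) := by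
  rw [isExpansion_iff_tail (one_lt_natCast_add_one hm), h₀]
  simp [show m ≤ 2 * m by omega]

lemma isExpansion_one_iff_of_head_ne (hm : 0 < m) (h₀ : c 0 ≠ m) :
    IsExpansion (m + 1) (2 * m) 1 c ↔
      (c 0 = m + 1 ∧ ∀ i, c (i + 1) = 0) ∨ (c 0 = m - 1 ∧ ∀ i, c (i + 1) = 2 * m) := by
  have hq := one_lt_natCast_add_one hm
  have hmax : ((m : ℝ) + 1) * 1 - ((m - 1 : ℕ) : ℝ) = ((2 * m : ℕ) : ℝ) / ((m : ℝ) + 1 - 1) := by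
    rw [Nat.cast_sub hm, add_sub_cancel_right]
    push_cast
    field_simp
    ring
  rw [isExpansion_iff_tail hq]
  constructor
  · rintro ⟨-, htail⟩
    have hle := htail.le hq
    have hge := htail.nonneg hq
    rw [← hmax] at hle
    have hupper : c 0 ≤ m + 1 := by exact_mod_cast (by linarith : (c 0 : ℝ) ≤ m + 1)
    have hlower : m - 1 ≤ c 0 := by exact_mod_cast (by linarith : ((m - 1 : ℕ) : ℝ) ≤ c 0)
    rcases (by omega : c 0 = m + 1 ∨ c 0 = m - 1) with h | h
    · rw [h, show ((m : ℝ) + 1) * 1 - ((m + 1 : ℕ) : ℝ) = 0 by push_cast; ring] at htail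
      exact Or.inl ⟨h, htail.eq_zero hq⟩
    · rw [h, hmax] at htail
      exact Or.inr ⟨h, htail.eq_of_eq_max hq⟩
  · rintro (⟨h, htail⟩ | ⟨h, htail⟩)
    · refine ⟨by omega, ?_⟩
      rw [funext htail, h]
      convert isExpansion_const hq (M := 2 * m) (Nat.zero_le _) using 1
      push_cast
      ring
    · refine ⟨by omega, ?_⟩
      rw [funext htail, h, hmax]
      exact isExpansion_const hq le_rfl

lemma isExpansion_one_and_prefix_iff (hm : 0 < m) (k : ℕ) :
    (IsExpansion (m + 1) (2 * m) 1 c ∧ (∀ i < k, c i = m) ∧ c k ≠ m) ↔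
      c = blockSeq m k (m + 1) 0 ∨ c = blockSeq m k (m - 1) (2 * m) := by
  induction k generalizing c with
  | zero =>
    rw [eq_blockSeq_zero_iff, eq_blockSeq_zero_iff]
    simp only [Nat.not_lt_zero, false_imp_iff, implies_true, true_and]
    constructor
    · exact fun ⟨h, h₀⟩ => (isExpansion_one_iff_of_head_ne hm h₀).mp h
    · intro h
      have h₀ : c 0 ≠ m := by rcases h with ⟨h₀, -⟩ | ⟨h₀, -⟩ <;> omega
      exact ⟨(isExpansion_one_iff_of_head_ne hm h₀).mpr h, h₀⟩
  | succ k ih =>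
    rw [eq_blockSeq_succ_iff, eq_blockSeq_succ_iff, ← and_or_left, ← ih, Nat.forall_lt_succ_left]
    constructor
    · rintro ⟨h, ⟨h₀, hpre⟩, hk⟩
      exact ⟨h₀, (isExpansion_one_iff_tail_of_head_eq hm h₀).mp h, hpre, hk⟩
    · rintro ⟨h₀, h, hpre, hk⟩
      exact ⟨(isExpansion_one_iff_tail_of_head_eq hm h₀).mpr h, ⟨h₀, hpre⟩, hk⟩

lemma countable_setOf_isExpansion_one (hm : 0 < m) :
    {c | IsExpansion (m + 1) (2 * m) 1 c}.Countable := by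
  have hsub : {c | IsExpansion (m + 1) (2 * m) 1 c} ⊆
      insert (fun _ => m) (⋃ k, {blockSeq m k (m + 1) 0, blockSeq m k (m - 1) (2 * m)}) := by
    intro c hc
    by_cases h : ∃ k, c k ≠ m
    · exact Or.inr (Set.mem_iUnion.mpr ⟨Nat.find h, (isExpansion_one_and_prefix_iff hm _).mp
        ⟨hc, fun i hi => not_not.mp (Nat.find_min h hi), Nat.find_spec h⟩⟩)
    · exact Or.inl (funext (not_exists_not.mp h))
  exact ((Set.countable_iUnion fun k => (Set.toFinite _).countable).insert _).mono hsub

lemma infinite_setOf_isExpansion_one (hm : 0 < m) :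
    {c | IsExpansion (m + 1) (2 * m) 1 c}.Infinite :=
  Set.infinite_of_injective_forall_mem (blockSeq_injective (by omega)) fun k =>
    ((isExpansion_one_and_prefix_iff hm k).mpr (Or.inl rfl)).1

end SuccBase

theorem stmt12 (m : ℕ) (hm : 0 < m) (M : ℕ) (hM : M = 2 * m)
    (q : ℝ) (hq : q = (m : ℝ) + 1) (k : ℕ) :
    {c : ℕ → ℕ | (∀ i, c i ≤ M) ∧ (∑' i : ℕ, (c i : ℝ) / q ^ (i + 1)) = 1 ∧
        (∀ i < k, c i = m) ∧ c k ≠ m} =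
      {fun i => if i < k then m else if i = k then m + 1 else 0,
       fun i => if i < k then m else if i = k then m - 1 else 2 * m} ∧
    Cardinal.mk {c : ℕ → ℕ // (∀ i, c i ≤ M) ∧ (∑' i : ℕ, (c i : ℝ) / q ^ (i + 1)) = 1} =
      Cardinal.aleph0 := by
  subst hM hq
  refine ⟨Set.ext fun c => and_assoc.symm.trans (isExpansion_one_and_prefix_iff hm k), ?_⟩
  have := (countable_setOf_isExpansion_one hm).to_subtype
  have := (infinite_setOf_isExpansion_one hm).to_subtype
  exact Cardinal.mk_eq_aleph0 {c | IsExpansion (m + 1) (2 * m) 1 c}
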